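/- Let κ < λ be regular uncountable cardinals. If there exists a simple P_λ-point ultrafilter U on κ (a uniform ultrafilter with a ⊆*-decreasing generating sequence of length λ), then λ = 𝔡_κ = 𝔟_κ = 𝔲_κ = 𝔲^com_κ. In particular, if μ ≠ λ is regular, there is no simple P_μ-point on κ. -/

import Mathlib

open Cardinal Set

namespace PaperFormal

/-- `A` is unbounded in `κ` (as a set of ordinals below `κ`). -/
def UnboundedIn (κ : Ordinal.{0}) (A : Set Ordinal) : Prop :=
  ∀ α < κ, ∃ β ∈ A, α ≤ β

/-- `A ⊆* B`: almost inclusion (mod bounded) below `κ`. -/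
def AlmostSub (κ : Ordinal.{0}) (A B : Set Ordinal) : Prop :=
  ∃ α < κ, ∀ β ∈ A, α ≤ β → β ∈ B

/-- `C` is closed in `κ`. -/
def ClosedIn (κ : Ordinal.{0}) (C : Set Ordinal) : Prop :=
  ∀ α, α < κ → α ≠ 0 → (∀ β < α, (C ∩ Set.Ioo β α).Nonempty) → α ∈ C

/-- `C` is a club (closed unbounded set) in `κ`. -/
def IsClub (κ : Ordinal.{0}) (C : Set Ordinal) : Prop :=
  C ⊆ Set.Iio κ ∧ UnboundedIn κ C ∧ ClosedIn κ C

/-- `f` maps `κ` into `κ`. -/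
def FunOn (κ : Ordinal.{0}) (f : Ordinal → Ordinal) : Prop :=
  ∀ β < κ, f β < κ

/-- almost everywhere domination `f ≤* g` on `κ`. -/
def LeStar (κ : Ordinal.{0}) (f g : Ordinal → Ordinal) : Prop :=
  ∃ α < κ, ∀ β, α ≤ β → β < κ → f β ≤ g β

def UnboundedFunFam (κ : Ordinal.{0}) (𝒜 : Set (Ordinal → Ordinal)) : Prop :=
  (∀ f ∈ 𝒜, FunOn κ f) ∧ ∀ g, FunOn κ g → ∃ f ∈ 𝒜, ¬ LeStar κ f g

def DominatingFunFam (κ : Ordinal.{0}) (𝒜 : Set (Ordinal → Ordinal)) : Prop :=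
  (∀ f ∈ 𝒜, FunOn κ f) ∧ ∀ g, FunOn κ g → ∃ f ∈ 𝒜, LeStar κ g f

/-- the generalized bounding number `𝔟_κ`. -/
noncomputable def bNum (κ : Ordinal.{0}) : Cardinal :=
  sInf { μ : Cardinal.{0} | ∃ 𝒜, UnboundedFunFam κ 𝒜 ∧ #𝒜 = Cardinal.lift.{1} μ }

/-- the generalized dominating number `𝔡_κ`. -/
noncomputable def dNum (κ : Ordinal.{0}) : Cardinal :=
  sInf { μ : Cardinal.{0} | ∃ 𝒜, DominatingFunFam κ 𝒜 ∧ #𝒜 = Cardinal.lift.{1} μ }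

/-- a (proper) filter on `κ`. -/
structure IsKFilter (κ : Ordinal.{0}) (F : Set (Set Ordinal)) : Prop where
  subset : ∀ A ∈ F, A ⊆ Set.Iio κ
  univ_mem : Set.Iio κ ∈ F
  upward : ∀ A ∈ F, ∀ B, B ⊆ Set.Iio κ → A ⊆ B → B ∈ F
  inter : ∀ A ∈ F, ∀ B ∈ F, A ∩ B ∈ F
  proper : ∅ ∉ F

/-- an ultrafilter on `κ`. -/
structure IsKUltrafilter (κ : Ordinal.{0}) (U : Set (Set Ordinal)) extends IsKFilter κ U : Prop where
  decide : ∀ A, A ⊆ Set.Iio κ → A ∈ U ∨ (Set.Iio κ \ A) ∈ U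

/-- uniformity: every member is unbounded (equivalently, for regular `κ`, of size `κ`). -/
def Uniform (κ : Ordinal.{0}) (F : Set (Set Ordinal)) : Prop :=
  ∀ A ∈ F, UnboundedIn κ A

/-- `κ`-completeness. -/
def KComplete (κ : Ordinal.{0}) (F : Set (Set Ordinal)) : Prop :=
  ∀ s : Set (Set Ordinal), s ⊆ F → s.Nonempty → #s < Cardinal.lift.{1} κ.card → ⋂₀ s ∈ F

/-- closure under diagonal intersections. -/
def DiagClosed (κ : Ordinal.{0}) (F : Set (Set Ordinal)) : Prop :=
  ∀ A : Ordinal → Set Ordinal, (∀ i < κ, A i ∈ F) →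
    {β | β < κ ∧ ∀ i < β, β ∈ A i} ∈ F

/-- a normal ultrafilter on `κ`: `κ`-complete, contains all clubs, closed under
diagonal intersections. -/
def NormalUF (κ : Ordinal.{0}) (U : Set (Set Ordinal)) : Prop :=
  IsKUltrafilter κ U ∧ Uniform κ U ∧ KComplete κ U ∧
    (∀ C, IsClub κ C → C ∈ U) ∧ DiagClosed κ U

/-- `ℬ` is a `⊆*`-base for `F`. -/
def IsBase (κ : Ordinal.{0}) (F ℬ : Set (Set Ordinal)) : Prop :=
  ℬ ⊆ F ∧ ∀ A ∈ F, ∃ B ∈ ℬ, AlmostSub κ B A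

/-- the character of a filter. -/
noncomputable def chNum (κ : Ordinal.{0}) (F : Set (Set Ordinal)) : Cardinal :=
  sInf { μ : Cardinal.{0} | ∃ ℬ, IsBase κ F ℬ ∧ #ℬ = Cardinal.lift.{1} μ }

/-- there is a `⊆*`-decreasing `λ`-sequence in `F` with no `⊆*`-lower bound in `F`. -/
def HasTower (κ : Ordinal.{0}) (F : Set (Set Ordinal)) (lam : Cardinal) : Prop :=
  ∃ S : Ordinal → Set Ordinal, (∀ i < lam.ord, S i ∈ F) ∧
    (∀ i j, i < j → j < lam.ord → AlmostSub κ (S j) (S i)) ∧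
    ¬ ∃ Y ∈ F, ∀ i < lam.ord, AlmostSub κ Y (S i)

/-- the depth `𝔱(F)` of a filter. -/
noncomputable def tNum (κ : Ordinal.{0}) (F : Set (Set Ordinal)) : Cardinal :=
  sInf { μ : Cardinal.{0} | μ.IsRegular ∧ HasTower κ F μ }

/-- the ultrafilter number `𝔲_κ`. -/
noncomputable def uNum (κ : Ordinal.{0}) : Cardinal :=
  sInf { μ : Cardinal.{0} | ∃ U, IsKUltrafilter κ U ∧ Uniform κ U ∧ chNum κ U = μ }

/-- the complete ultrafilter number `𝔲^com_κ`. -/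
noncomputable def uComNum (κ : Ordinal.{0}) : Cardinal :=
  sInf { μ : Cardinal.{0} | ∃ U, IsKUltrafilter κ U ∧ Uniform κ U ∧ KComplete κ U ∧ chNum κ U = μ }

/-- `U` is a simple `P_λ`-point: a uniform ultrafilter with a `⊆*`-decreasing
generating sequence of length `λ`. -/
def SimplePPoint (κ : Ordinal.{0}) (lam : Cardinal) (U : Set (Set Ordinal)) : Prop :=
  IsKUltrafilter κ U ∧ Uniform κ U ∧
    ∃ S : Ordinal → Set Ordinal, (∀ i < lam.ord, S i ∈ U) ∧
      (∀ i j, i < j → j < lam.ord → AlmostSub κ (S j) (S i)) ∧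
      ∀ A ∈ U, ∃ i < lam.ord, AlmostSub κ (S i) A

/-- a `⊆*`-decreasing generating sequence of length `λ` for a filter `F`. -/
def SimplePFilter (κ : Ordinal.{0}) (lam : Cardinal) (F : Set (Set Ordinal)) : Prop :=
  ∃ S : Ordinal → Set Ordinal, (∀ i < lam.ord, S i ∈ F) ∧
    (∀ i j, i < j → j < lam.ord → AlmostSub κ (S j) (S i)) ∧
    ∀ A ∈ F, ∃ i < lam.ord, AlmostSub κ (S i) A

/-- `ℬ` is a `π`-base for `U`: unbounded sets, almost contained in members of `U`. -/
def IsPiBase (κ : Ordinal.{0}) (U ℬ : Set (Set Ordinal)) : Prop :=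
  (∀ B ∈ ℬ, B ⊆ Set.Iio κ ∧ UnboundedIn κ B) ∧ ∀ A ∈ U, ∃ B ∈ ℬ, AlmostSub κ B A

/-- the `π`-character `πch(U)`. -/
noncomputable def piChNum (κ : Ordinal.{0}) (U : Set (Set Ordinal)) : Cardinal :=
  sInf { μ : Cardinal.{0} | ∃ ℬ, IsPiBase κ U ℬ ∧ #ℬ = Cardinal.lift.{1} μ }

/-- `Y` is a pseudo-intersection of the family `𝒜`. -/
def IsPseudoInter (κ : Ordinal.{0}) (𝒜 : Set (Set Ordinal)) (Y : Set Ordinal) : Prop :=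
  Y ⊆ Set.Iio κ ∧ UnboundedIn κ Y ∧ ∀ A ∈ 𝒜, AlmostSub κ Y A

/-- `π𝔭(U)`: the least size of a subfamily of `U` with no pseudo-intersection. -/
noncomputable def piPNum (κ : Ordinal.{0}) (U : Set (Set Ordinal)) : Cardinal :=
  sInf { μ : Cardinal.{0} | ∃ 𝒜, 𝒜 ⊆ U ∧ #𝒜 = Cardinal.lift.{1} μ ∧ ¬ ∃ Y, IsPseudoInter κ 𝒜 Y }

/-- a `⊆*`-decreasing `λ`-sequence in `U` unbounded in `([κ]^κ, ⊇*)`. -/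
def HasPiTower (κ : Ordinal.{0}) (U : Set (Set Ordinal)) (lam : Cardinal) : Prop :=
  ∃ S : Ordinal → Set Ordinal, (∀ i < lam.ord, S i ∈ U) ∧
    (∀ i j, i < j → j < lam.ord → AlmostSub κ (S j) (S i)) ∧
    ¬ ∃ Y, Y ⊆ Set.Iio κ ∧ UnboundedIn κ Y ∧ ∀ i < lam.ord, AlmostSub κ Y (S i)

/-- `π𝔱(U)`. -/
noncomputable def piTNum (κ : Ordinal.{0}) (U : Set (Set Ordinal)) : Cardinal :=
  sInf { μ : Cardinal.{0} | μ.IsRegular ∧ HasPiTower κ U μ }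

/-- `A` splits `B`. -/
def Splits (κ : Ordinal.{0}) (A B : Set Ordinal) : Prop :=
  UnboundedIn κ (B ∩ A) ∧ UnboundedIn κ (B \ A)

/-- the splitting number `𝔰_κ`. -/
noncomputable def sNum (κ : Ordinal.{0}) : Cardinal :=
  sInf { μ : Cardinal.{0} | ∃ 𝒜 : Set (Set Ordinal), (∀ A ∈ 𝒜, A ⊆ Set.Iio κ) ∧
    (∀ X, X ⊆ Set.Iio κ → UnboundedIn κ X → ∃ A ∈ 𝒜, Splits κ A X) ∧ #𝒜 = Cardinal.lift.{1} μ }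

/-- the reaping number `𝔯_κ`. -/
noncomputable def rNum (κ : Ordinal.{0}) : Cardinal :=
  sInf { μ : Cardinal.{0} | ∃ 𝒜 : Set (Set Ordinal), (∀ A ∈ 𝒜, A ⊆ Set.Iio κ ∧ UnboundedIn κ A) ∧
    (¬ ∃ X, X ⊆ Set.Iio κ ∧ ∀ A ∈ 𝒜, Splits κ X A) ∧ #𝒜 = Cardinal.lift.{1} μ }

/-- `f` is almost one-to-one modulo `U`: bounded-to-one on a set in `U`. -/
def AlmostInjMod (κ : Ordinal.{0}) (U : Set (Set Ordinal)) (f : Ordinal → Ordinal) : Prop :=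
  ∃ X ∈ U, ∀ γ < κ, ∃ α < κ, ∀ β ∈ X, f β = γ → β < α

/-- the pushforward `f_*(U)`. -/
def PushFwd (κ : Ordinal.{0}) (f : Ordinal → Ordinal) (U : Set (Set Ordinal)) :
    Set (Set Ordinal) :=
  { A | A ⊆ Set.Iio κ ∧ (Set.Iio κ ∩ f ⁻¹' A) ∈ U }

/-- countable completeness. -/
def CountablyComplete (U : Set (Set Ordinal)) : Prop :=
  ∀ s : Set (Set Ordinal), s ⊆ U → s.Countable → s.Nonempty → ⋂₀ s ∈ U

/-!
The generating sequence `⟨S i : i < λ⟩` of `U` yields, for fewer than `λ` members of `U`,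
an `S i` almost contained in all of them; as `κ < λ`, `U` is `κ`-complete. A `U`-minimal
function `f` unbounded mod `U` then pushes `U` to a normal measure, so `f⁻¹ C ∈ U` for every
club `C`. Reading off from each `S i` the least point `δ > β` of `S i` with `f δ > β` gives a
scale of length `λ` in `(κ^κ, ≤*)`, whence `𝔟_κ = 𝔡_κ = λ`. A uniform ultrafilter `W` with
a base `ℬ` of size `< λ` is impossible: the successor functions of the members of `ℬ` are
bounded by some `g`, and a union of intervals between closure points of `g` splits every member
of `ℬ`. Hence every uniform ultrafilter has character at least `λ = ch(U)`, which gives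
`𝔲_κ = 𝔲^com_κ = λ`. A simple `P_μ`-point with `μ < λ` has character at most `μ`, and one
with `μ > λ` would by the same argument force `ch(U) ≥ μ`.
-/

theorem csInf_eq_of_forall_ge_of_exists_le {α : Type*} [ConditionallyCompleteLattice α]
    {s : Set α} {a : α} (hlb : ∀ b ∈ s, a ≤ b) (hub : ∃ b ∈ s, b ≤ a) :
    sInf s = a := by
  obtain ⟨b, hb, hba⟩ := hub
  exact le_antisymm ((csInf_le ⟨a, hlb⟩ hb).trans hba) (le_csInf ⟨b, hb⟩ hlb)

theorem exists_forall_lt_of_mk_lt {lam : Cardinal.{0}} (hlam : lam.IsRegular) {ι : Type 1}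
    {F : ι → Ordinal.{0}} (hF : ∀ i, F i < lam.ord) (hι : #ι < Cardinal.lift.{1} lam) :
    ∃ b < lam.ord, ∀ i, F i < b := by
  refine ⟨⨆ i, F i + 1, Ordinal.lift_iSup_add_one_lt_of_lt_cof ?_ hF, fun i => ?_⟩
  · rwa [← Ordinal.lift_cof, hlam.cof_ord, Cardinal.lift_uzero]
  · refine (lt_add_one (F i)).trans_le (le_ciSup (f := fun i => F i + 1) ⟨lam.ord, ?_⟩ i)
    rintro _ ⟨j, rfl⟩
    exact Order.add_one_le_iff.2 (hF j)

theorem exists_mk_image_Iio_ord_eq_lift {α : Type 1} (F : Ordinal.{0} → α)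
    (lam : Cardinal.{0}) : ∃ ν ≤ lam, #(F '' Iio lam.ord) = Cardinal.lift.{1} ν := by
  have h : #(F '' Iio lam.ord) ≤ Cardinal.lift.{1} lam :=
    mk_image_le.trans (by rw [Cardinal.mk_Iio_ordinal, card_ord])
  obtain ⟨ν, hν⟩ := mem_range_lift_of_le h
  exact ⟨ν, lift_le.1 (hν ▸ h), hν.symm⟩

theorem exists_mk_eq_lift_of_subset_Iio {κ : Ordinal.{0}} {W : Set (Set Ordinal.{0})}
    (hW : ∀ A ∈ W, A ⊆ Iio κ) : ∃ ν : Cardinal.{0}, #W = Cardinal.lift.{1} ν := by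
  have h : #W ≤ Cardinal.lift.{1} (2 ^ κ.card) :=
    calc #W ≤ #(𝒫 Iio κ) := mk_le_mk_of_subset hW
      _ = _ := by rw [mk_powerset, Cardinal.mk_Iio_ordinal, lift_two_power]
  obtain ⟨ν, hν⟩ := mem_range_lift_of_le h
  exact ⟨ν, hν.symm⟩

section Almost

variable {κ : Ordinal.{0}}

theorem AlmostSub.refl (hκ : 0 < κ) (A : Set Ordinal) : AlmostSub κ A A :=
  ⟨0, hκ, fun _ hβ _ => hβ⟩

theorem AlmostSub.trans {A B C : Set Ordinal} (hAB : AlmostSub κ A B) (hBC : AlmostSub κ B C) :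
    AlmostSub κ A C := by
  obtain ⟨α, hα, hAB⟩ := hAB
  obtain ⟨α', hα', hBC⟩ := hBC
  exact ⟨max α α', max_lt hα hα', fun β hβ hle =>
    hBC β (hAB β hβ ((le_max_left _ _).trans hle)) ((le_max_right _ _).trans hle)⟩

theorem LeStar.trans {f g h : Ordinal → Ordinal} (hfg : LeStar κ f g) (hgh : LeStar κ g h) :
    LeStar κ f h := by
  obtain ⟨α, hα, hfg⟩ := hfg
  obtain ⟨α', hα', hgh⟩ := hgh
  exact ⟨max α α', max_lt hα hα', fun β hle hβ =>
    (hfg β ((le_max_left _ _).trans hle) hβ).trans (hgh β ((le_max_right _ _).trans hle) hβ)⟩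

theorem not_leStar_add_one (h : Ordinal → Ordinal) : ¬ LeStar κ (fun β => h β + 1) h := by
  rintro ⟨α, hα, hle⟩
  exact (hle α le_rfl hα).not_gt (lt_add_one _)

theorem FunOn.add_one (hκ : Order.IsSuccLimit κ) {g : Ordinal → Ordinal} (hg : FunOn κ g) :
    FunOn κ (fun β => g β + 1) :=
  fun β hβ => hκ.add_one_lt (hg β hβ)

theorem Splits.not_almostSub {X B : Set Ordinal} (h : Splits κ X B) : ¬ AlmostSub κ B X := by
  rintro ⟨α, hα, hBX⟩
  obtain ⟨β, ⟨hβB, hβX⟩, hαβ⟩ := h.2 α hα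
  exact hβX (hBX β hβB hαβ)

theorem Splits.not_almostSub_diff {X B : Set Ordinal} (h : Splits κ X B) :
    ¬ AlmostSub κ B (Iio κ \ X) := by
  rintro ⟨α, hα, hBX⟩
  obtain ⟨β, ⟨hβB, hβX⟩, hαβ⟩ := h.1 α hα
  exact (hBX β hβB hαβ).2 hβX

end Almost

section Filters

variable {κ : Ordinal.{0}} {U : Set (Set Ordinal)}

theorem IsKFilter.nonempty_of_mem (hU : IsKFilter κ U) {A : Set Ordinal} (hA : A ∈ U) :
    A.Nonempty :=
  nonempty_iff_ne_empty.2 fun h => hU.proper (h ▸ hA)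

theorem IsKFilter.setOf_mem (hU : IsKFilter κ U) {A : Set Ordinal} {P : Ordinal → Prop}
    (hA : A ∈ U) (h : ∀ β ∈ A, P β) : {β | β < κ ∧ P β} ∈ U :=
  hU.upward A hA _ (fun _ hβ => hβ.1) fun β hβ => ⟨hU.subset A hA hβ, h β hβ⟩

theorem IsKUltrafilter.setOf_mem_or (hU : IsKUltrafilter κ U) (P : Ordinal → Prop) :
    {β | β < κ ∧ P β} ∈ U ∨ {β | β < κ ∧ ¬ P β} ∈ U := by
  refine (hU.decide _ fun _ hβ => hβ.1).imp id fun h => ?_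
  convert h using 1
  ext β
  simp only [mem_ofPred_eq, mem_sdiff, mem_Iio, not_and]
  tauto

theorem IsKUltrafilter.Ico_mem (hU : IsKUltrafilter κ U) (huni : Uniform κ U) {α : Ordinal}
    (hα : α < κ) : Ico α κ ∈ U := by
  refine (hU.decide _ fun _ hβ => hβ.2).resolve_right fun h => ?_
  obtain ⟨β, ⟨hβ, hβα⟩, hαβ⟩ := huni _ h α hα
  exact hβα ⟨hαβ, hβ⟩

theorem KComplete.countablyComplete (hκ : ℵ₀ < κ.card) (hU : KComplete κ U) :
    CountablyComplete U :=
  fun s hs hsc hne => hU s hs hne (hsc.le_aleph0.trans_lt (aleph0_lt_lift.2 hκ))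

end Filters

noncomputable def nextAbove (X : Set Ordinal) (β : Ordinal) : Ordinal :=
  sInf {δ | δ ∈ X ∧ β < δ}

theorem nextAbove_mem {κ : Ordinal.{0}} (hκ : Order.IsSuccLimit κ) {X : Set Ordinal}
    (hX : UnboundedIn κ X) {β : Ordinal} (hβ : β < κ) :
    nextAbove X β ∈ X ∧ β < nextAbove X β := by
  obtain ⟨δ, hδ, hβδ⟩ := hX _ (hκ.add_one_lt hβ)
  exact csInf_mem (s := {δ | δ ∈ X ∧ β < δ}) ⟨δ, hδ, Order.add_one_le_iff.1 hβδ⟩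

theorem nextAbove_le {X : Set Ordinal} {β δ : Ordinal} (hδ : δ ∈ X) (hβδ : β < δ) :
    nextAbove X β ≤ δ :=
  csInf_le' ⟨hδ, hβδ⟩

def closurePoints (κ : Ordinal.{0}) (g : Ordinal → Ordinal) : Set Ordinal :=
  {δ | δ < κ ∧ ∀ β < δ, g β < δ}

section ClosurePoints

variable {κ : Cardinal.{0}} {g : Ordinal → Ordinal}

theorem unboundedIn_closurePoints (hreg : κ.IsRegular) (hunc : ℵ₀ < κ) (hg : FunOn κ.ord g) :
    UnboundedIn κ.ord (closurePoints κ.ord g) := by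
  intro α hα
  let F : Ordinal → Ordinal := fun x => ⨆ β : Iio x, g β + 1
  have hgF : ∀ x, ∀ β < x, g β < F x := fun x β hβ =>
    Order.add_one_le_iff.1 <|
      le_ciSup (f := fun β : Iio x => g β + 1) Ordinal.bddAbove_of_small ⟨β, hβ⟩
  have hF : ∀ x < κ.ord, F x < κ.ord := fun x hx => by
    refine Ordinal.lift_iSup_add_one_lt_of_lt_cof ?_ fun β => hg β (β.2.trans hx)
    rw [Cardinal.mk_Iio_ordinal, ← Ordinal.lift_cof, hreg.cof_ord, lift_uzero, lift_lt]
    exact lt_ord.1 hx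
  refine ⟨Ordinal.nfp F α, ⟨Cardinal.nfp_lt_ord_of_isRegular hreg hunc.ne' hF hα,
    fun β hβ => ?_⟩, Ordinal.le_nfp F α⟩
  obtain ⟨n, hn⟩ := Ordinal.lt_nfp_iff.1 hβ
  refine (hgF _ β hn).trans_le ?_
  simpa only [Function.iterate_succ_apply'] using Ordinal.iterate_le_nfp F α (n + 1)

theorem isClub_closurePoints (hreg : κ.IsRegular) (hunc : ℵ₀ < κ) (hg : FunOn κ.ord g) :
    IsClub κ.ord (closurePoints κ.ord g) := by
  refine ⟨fun _ hδ => hδ.1, unboundedIn_closurePoints hreg hunc hg,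
    fun δ hδ _ hcl => ⟨hδ, fun β hβ => ?_⟩⟩
  obtain ⟨x, hx, hβx, hxδ⟩ := hcl β hβ
  exact (hx.2 β hβx).trans hxδ

/-- Writing `c⁺` for the next closure point of `g` after `c`, take `X = ⋃ (d, d⁺]` over the
closure points `d` of `c ↦ c⁺⁺`. Such a `B` meets every `(c, c⁺)`, in particular
`(d, d⁺) ⊆ X` and `(d⁺, d⁺⁺)`, which misses `X`. -/
theorem exists_splits_of_leStar (hreg : κ.IsRegular) (hunc : ℵ₀ < κ) (hg : FunOn κ.ord g) :
    ∃ X ⊆ Iio κ.ord, ∀ B, UnboundedIn κ.ord B → LeStar κ.ord (nextAbove B) g →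
      Splits κ.ord X B := by
  have hlim := isSuccLimit_ord hreg.aleph0_le
  set C := closurePoints κ.ord g
  have hC : ∀ c < κ.ord, nextAbove C c ∈ C ∧ c < nextAbove C c :=
    fun c hc => nextAbove_mem hlim (unboundedIn_closurePoints hreg hunc hg) hc
  have hgC : ∀ c < κ.ord, g c < nextAbove C c := fun c hc => (hC c hc).1.2 c (hC c hc).2
  set D := closurePoints κ.ord fun c => nextAbove C (nextAbove C c)
  have hD : UnboundedIn κ.ord D :=
    unboundedIn_closurePoints hreg hunc fun c hc => (hC _ (hC c hc).1.1).1.1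
  have hDC : D ⊆ C := fun d hd => ⟨hd.1, fun c hc =>
    (hgC c (hc.trans hd.1)).trans ((hC _ (hC c (hc.trans hd.1)).1.1).2.trans (hd.2 c hc))⟩
  refine ⟨{x | ∃ d ∈ D, d < x ∧ x ≤ nextAbove C d}, ?_,
    fun B hB ⟨α₀, hα₀, hBg⟩ => ?_⟩
  · rintro x ⟨d, hd, -, hx⟩
    exact hx.trans_lt (hC d hd.1).1.1
  have hBC : ∀ c, α₀ ≤ c → c < κ.ord →
      nextAbove B c ∈ B ∧ c < nextAbove B c ∧ nextAbove B c < nextAbove C c :=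
    fun c hc hcκ => ⟨(nextAbove_mem hlim hB hcκ).1, (nextAbove_mem hlim hB hcκ).2,
      (hBg c hc hcκ).trans_lt (hgC c hcκ)⟩
  constructor
  · intro α hα
    obtain ⟨d, hd, hαd⟩ := hD _ (max_lt hα hα₀)
    obtain ⟨hb, hdb, hbd⟩ := hBC d (le_of_max_le_right hαd) hd.1
    exact ⟨_, ⟨hb, d, hd, hdb, hbd.le⟩, (le_of_max_le_left hαd).trans hdb.le⟩
  · intro α hα
    obtain ⟨d, hd, hαd⟩ := hD _ (max_lt hα hα₀)
    obtain ⟨hcC, hdc⟩ := hC d hd.1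
    obtain ⟨hb, hcb, hbc⟩ := hBC _ ((le_of_max_le_right hαd).trans hdc.le) hcC.1
    refine ⟨_, ⟨hb, ?_⟩, (le_of_max_le_left hαd).trans (hdc.trans hcb).le⟩
    rintro ⟨d', hd', hd'b, hbd'⟩
    rcases lt_trichotomy d' d with hlt | rfl | hgt
    · exact (hbd'.trans (nextAbove_le (hDC hd) hlt)).not_gt (hdc.trans hcb)
    · exact hbd'.not_gt hcb
    · exact (hbc.trans (hd'.2 d hgt)).not_gt hd'b

end ClosurePoints

def UnboundedMod (κ : Ordinal.{0}) (U : Set (Set Ordinal)) (h : Ordinal → Ordinal) : Prop :=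
  FunOn κ h ∧ ∀ γ < κ, {β | β < κ ∧ γ < h β} ∈ U

def IsMinimalUnbounded (κ : Ordinal.{0}) (U : Set (Set Ordinal)) (f : Ordinal → Ordinal) :
    Prop :=
  UnboundedMod κ U f ∧ ∀ h, UnboundedMod κ U h → {β | β < κ ∧ h β < f β} ∉ U

section MinimalUnbounded

variable {κ : Ordinal.{0}} {U : Set (Set Ordinal)}

theorem unboundedMod_id (hU : IsKUltrafilter κ U) (huni : Uniform κ U)
    (hκ : Order.IsSuccLimit κ) : UnboundedMod κ U id :=
  ⟨fun _ hβ => hβ, fun _ hγ =>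
    hU.setOf_mem (hU.Ico_mem huni (hκ.add_one_lt hγ)) fun _ hβ => Order.add_one_le_iff.1 hβ.1⟩

/-- Otherwise there is a `U`-decreasing `ω`-sequence of unbounded functions, and by countable
completeness it is pointwise decreasing on a nonempty set. -/
theorem exists_isMinimalUnbounded (hU : IsKUltrafilter κ U) (huni : Uniform κ U)
    (hκ : Order.IsSuccLimit κ) (hcc : CountablyComplete U) :
    ∃ f, IsMinimalUnbounded κ U f := by
  by_contra! hmin
  have hdesc : ∀ f : {h // UnboundedMod κ U h},
      ∃ g : {h // UnboundedMod κ U h}, {β | β < κ ∧ g.1 β < f.1 β} ∈ U := by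
    rintro ⟨f, hf⟩
    simpa [IsMinimalUnbounded, hf] using hmin f
  choose next hnext using hdesc
  let seq : ℕ → {h // UnboundedMod κ U h} :=
    fun n => next^[n] ⟨id, unboundedMod_id hU huni hκ⟩
  have hseq : ∀ n, {β | β < κ ∧ (seq (n + 1)).1 β < (seq n).1 β} ∈ U := fun n => by
    simpa only [seq, Function.iterate_succ_apply'] using hnext (seq n)
  obtain ⟨β, hβ⟩ := hU.nonempty_of_mem
    (hcc _ (range_subset_iff.2 hseq) (countable_range _) (range_nonempty _))
  exact not_strictAnti_of_wellFoundedLT (fun n => (seq n).1 β)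
    (strictAnti_nat_of_succ_lt fun n => (mem_sInter.1 hβ _ ⟨n, rfl⟩).2)

variable {f : Ordinal → Ordinal}

theorem IsMinimalUnbounded.setOf_le_mem (hf : IsMinimalUnbounded κ U f) (hU : IsKUltrafilter κ U)
    (huni : Uniform κ U) (hκ : Order.IsSuccLimit κ) : {β | β < κ ∧ f β ≤ β} ∈ U := by
  refine (hU.setOf_mem_or _).resolve_right fun hgt => hf.2 (fun β => min (f β) β) ?_ ?_
  · refine ⟨fun β hβ => (min_le_right _ _).trans_lt hβ, fun γ hγ => ?_⟩
    exact hU.setOf_mem (hU.inter _ (hf.1.2 γ hγ) _ ((unboundedMod_id hU huni hκ).2 γ hγ))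
      fun β hβ => lt_min hβ.1.2 hβ.2.2
  · exact hU.setOf_mem hgt fun β hβ => min_lt_iff.2 (Or.inr (not_le.1 hβ.2))

/-- If `f β ∉ C` on a set in `U`, then `β ↦ sup (C ∩ f β)` is still unbounded mod `U`
(as `C` is unbounded) and, `C` being closed, below `f` on that set. -/
theorem IsMinimalUnbounded.preimage_mem_of_isClub (hf : IsMinimalUnbounded κ U f)
    (hU : IsKUltrafilter κ U) (hκ : Order.IsSuccLimit κ) {C : Set Ordinal} (hC : IsClub κ C) :
    {β | β < κ ∧ f β ∈ C} ∈ U := by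
  obtain ⟨hCκ, hCunb, hCcl⟩ := hC
  let h : Ordinal → Ordinal := fun β => sSup {x | x ∈ C ∧ x < f β}
  have hle : ∀ β, h β ≤ f β := fun β => csSup_le' fun x hx => hx.2.le
  have hh : UnboundedMod κ U h := by
    refine ⟨fun β hβ => (hle β).trans_lt (hf.1.1 β hβ), fun γ hγ => ?_⟩
    obtain ⟨c, hc, hγc⟩ := hCunb _ (hκ.add_one_lt hγ)
    exact hU.setOf_mem (hf.1.2 c (hCκ hc)) fun β hβ => Order.add_one_le_iff.1 <|
      hγc.trans (le_csSup ⟨f β, fun x hx => hx.2.le⟩ ⟨hc, hβ.2⟩)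
  refine (hU.setOf_mem_or _).resolve_right fun hout => hf.2 h hh ?_
  refine hU.setOf_mem (hU.inter _ hout _ (hf.1.2 0 hκ.bot_lt)) fun β hβ => ?_
  obtain ⟨⟨hβκ, hfC⟩, -, hf0⟩ := hβ
  refine (hle β).lt_of_ne fun heq => hfC (hCcl _ (hf.1.1 β hβκ) hf0.ne' fun x hx => ?_)
  obtain ⟨y, ⟨hyC, hyf⟩, hxy⟩ := exists_lt_of_lt_csSup' (heq ▸ hx : x < h β)
  exact ⟨y, hyC, hxy, hyf⟩

end MinimalUnbounded

noncomputable def hitAbove (f : Ordinal → Ordinal) (A : Set Ordinal) (β : Ordinal) : Ordinal :=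
  nextAbove {δ | δ ∈ A ∧ β < f δ} β

section HitAbove

variable {κ : Ordinal.{0}} {U : Set (Set Ordinal)} {f : Ordinal → Ordinal} {A : Set Ordinal}

theorem hitAbove_mem (hU : IsKUltrafilter κ U) (huni : Uniform κ U) (hκ : Order.IsSuccLimit κ)
    (hf : UnboundedMod κ U f) (hA : A ∈ U) {β : Ordinal} (hβ : β < κ) :
    hitAbove f A β ∈ A ∧ β < f (hitAbove f A β) ∧ β < hitAbove f A β := by
  have hunb : UnboundedIn κ {δ | δ ∈ A ∧ β < f δ} := fun α hα => by
    obtain ⟨δ, ⟨hδA, -, hβf⟩, hαδ⟩ := huni _ (hU.inter _ hA _ (hf.2 β hβ)) α hα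
    exact ⟨δ, ⟨hδA, hβf⟩, hαδ⟩
  exact and_assoc.1 (nextAbove_mem hκ hunb hβ)

theorem funOn_hitAbove (hU : IsKUltrafilter κ U) (huni : Uniform κ U) (hκ : Order.IsSuccLimit κ)
    (hf : UnboundedMod κ U f) (hA : A ∈ U) : FunOn κ (hitAbove f A) :=
  fun _ hβ => hU.subset A hA (hitAbove_mem hU huni hκ hf hA hβ).1

theorem leStar_hitAbove_of_almostSub (hU : IsKUltrafilter κ U) (huni : Uniform κ U)
    (hκ : Order.IsSuccLimit κ) (hf : UnboundedMod κ U f) {B : Set Ordinal} (hB : B ∈ U)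
    (hBA : AlmostSub κ B A) : LeStar κ (hitAbove f A) (hitAbove f B) := by
  obtain ⟨α, hα, hBA⟩ := hBA
  refine ⟨α, hα, fun β hαβ hβ => ?_⟩
  obtain ⟨hδB, hβf, hβδ⟩ := hitAbove_mem hU huni hκ hf hB hβ
  exact nextAbove_le ⟨hBA _ hδB (hαβ.trans hβδ.le), hβf⟩ hβδ

theorem leStar_hitAbove (hU : IsKUltrafilter κ U) (huni : Uniform κ U)
    (hκ : Order.IsSuccLimit κ) (hf : UnboundedMod κ U f) (hA : A ∈ U) {g : Ordinal → Ordinal}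
    (hAg : AlmostSub κ A
      ({β | β < κ ∧ f β ∈ closurePoints κ g} ∩ {β | β < κ ∧ f β ≤ β})) :
    LeStar κ g (hitAbove f A) := by
  obtain ⟨α, hα, hAg⟩ := hAg
  refine ⟨α, hα, fun β hαβ hβ => ?_⟩
  obtain ⟨hδA, hβf, hβδ⟩ := hitAbove_mem hU huni hκ hf hA hβ
  obtain ⟨⟨-, hcl⟩, -, hfδ⟩ := hAg _ hδA (hαβ.trans hβδ.le)
  exact ((hcl.2 β hβf).trans_le hfδ).le

end HitAbove

def IsScale (κ : Ordinal.{0}) (lam : Cardinal.{0}) (φ : Ordinal → Ordinal → Ordinal) : Prop :=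
  (∀ i < lam.ord, FunOn κ (φ i)) ∧
    (∀ i j, i < j → j < lam.ord → LeStar κ (φ i) (φ j)) ∧
    ∀ g, FunOn κ g → ∃ i < lam.ord, LeStar κ g (φ i)

section SimplePPoint

variable {lam : Cardinal.{0}} {U : Set (Set Ordinal)}

theorem SimplePPoint.simplePFilter {κ : Ordinal.{0}} (hU : SimplePPoint κ lam U) :
    SimplePFilter κ lam U :=
  hU.2.2

theorem SimplePFilter.chNum_le {κ : Ordinal.{0}} (hU : SimplePFilter κ lam U) :
    chNum κ U ≤ lam := by
  obtain ⟨S, hSU, -, hSbase⟩ := hU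
  obtain ⟨ν, hν, hcard⟩ := exists_mk_image_Iio_ord_eq_lift S lam
  refine (csInf_le' (s := {μ | ∃ ℬ, IsBase κ U ℬ ∧ #ℬ = Cardinal.lift.{1} μ})
    ⟨_, ⟨?_, fun A hA => ?_⟩, hcard⟩).trans hν
  · rintro _ ⟨i, hi, rfl⟩
    exact hSU i hi
  · obtain ⟨i, hi, hiA⟩ := hSbase A hA
    exact ⟨S i, ⟨i, hi, rfl⟩, hiA⟩

theorem SimplePFilter.exists_almostSub_of_mk_lt {κ : Ordinal.{0}} (hlam : lam.IsRegular)
    (hU : SimplePFilter κ lam U) {s : Set (Set Ordinal)} (hs : s ⊆ U)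
    (hcard : #s < Cardinal.lift.{1} lam) : ∃ Y ∈ U, ∀ A ∈ s, AlmostSub κ Y A := by
  obtain ⟨S, hSU, hSdec, hSbase⟩ := hU
  choose i hi hiA using fun A : s => hSbase A (hs A.2)
  obtain ⟨b, hb, hib⟩ := exists_forall_lt_of_mk_lt hlam hi hcard
  exact ⟨S b, hSU b hb, fun A hA => (hSdec _ _ (hib ⟨A, hA⟩) hb).trans (hiA ⟨A, hA⟩)⟩

theorem SimplePPoint.kComplete {κ : Cardinal.{0}} (hreg : κ.IsRegular) (hlam : lam.IsRegular)
    (hlt : κ < lam) (hU : SimplePPoint κ.ord lam U) : KComplete κ.ord U := by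
  rintro s hs ⟨A₀, hA₀⟩ hcard
  rw [card_ord] at hcard
  obtain ⟨Y, hY, hYs⟩ :=
    hU.simplePFilter.exists_almostSub_of_mk_lt hlam hs (hcard.trans (lift_lt.2 hlt))
  obtain ⟨hUF, huni, -⟩ := hU
  choose α hα hαA using fun A : s => hYs A A.2
  obtain ⟨b, hb, hαb⟩ := exists_forall_lt_of_mk_lt hreg hα hcard
  refine hUF.upward _ (hUF.inter _ hY _ (hUF.Ico_mem huni hb)) _
    (fun β hβ => hUF.subset A₀ (hs hA₀) (hβ A₀ hA₀)) ?_
  rintro β ⟨hβY, hbβ, -⟩ A hA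
  exact hαA ⟨A, hA⟩ β hβY ((hαb _).le.trans hbβ)

/-- As `f` pushes `U` to a normal measure, some `S i` almost lies in `f⁻¹` of the closure points
of a given `g`, and there `g β < f (hitAbove f (S i) β) ≤ hitAbove f (S i) β`. -/
theorem SimplePPoint.exists_isScale {κ : Cardinal.{0}} (hreg : κ.IsRegular) (hunc : ℵ₀ < κ)
    (hlam : lam.IsRegular) (hlt : κ < lam) (hU : SimplePPoint κ.ord lam U) :
    ∃ φ, IsScale κ.ord lam φ := by
  have hκ := isSuccLimit_ord hreg.aleph0_le
  have hcc := (hU.kComplete hreg hlam hlt).countablyComplete (by rwa [card_ord])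
  obtain ⟨hUF, huni, S, hSU, hSdec, hSbase⟩ := hU
  obtain ⟨f, hf⟩ := exists_isMinimalUnbounded hUF huni hκ hcc
  refine ⟨fun i => hitAbove f (S i), fun i hi => funOn_hitAbove hUF huni hκ hf.1 (hSU i hi),
    fun i j hij hj => leStar_hitAbove_of_almostSub hUF huni hκ hf.1 (hSU j hj) (hSdec i j hij hj),
    fun g hg => ?_⟩
  obtain ⟨i, hi, hSi⟩ := hSbase _ (hUF.inter _
    (hf.preimage_mem_of_isClub hUF hκ (isClub_closurePoints hreg hunc hg)) _
    (hf.setOf_le_mem hUF huni hκ))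
  exact ⟨i, hi, leStar_hitAbove hUF huni hκ hf.1 (hSU i hi) hSi⟩

end SimplePPoint

namespace IsScale

variable {lam : Cardinal.{0}} {φ : Ordinal → Ordinal → Ordinal}

section

variable {κ : Ordinal.{0}}

theorem exists_leStar_bound (hφ : IsScale κ lam φ) (hlam : lam.IsRegular)
    {𝒜 : Set (Ordinal → Ordinal)} (h𝒜 : ∀ g ∈ 𝒜, FunOn κ g)
    (hcard : #𝒜 < Cardinal.lift.{1} lam) :
    ∃ h, FunOn κ h ∧ ∀ g ∈ 𝒜, LeStar κ g h := by
  obtain ⟨hφF, hφmono, hφdom⟩ := hφ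
  choose i hi hgi using fun g : 𝒜 => hφdom g (h𝒜 g g.2)
  obtain ⟨b, hb, hib⟩ := exists_forall_lt_of_mk_lt hlam hi hcard
  exact ⟨φ b, hφF b hb, fun g hg => (hgi ⟨g, hg⟩).trans (hφmono _ _ (hib _) hb)⟩

theorem bNum_eq (hφ : IsScale κ lam φ) (hlam : lam.IsRegular)
    (hκ : Order.IsSuccLimit κ) : bNum κ = lam := by
  refine csInf_eq_of_forall_ge_of_exists_le ?_ ?_
  · rintro μ ⟨𝒜, h𝒜, hcard⟩
    by_contra! hμ
    obtain ⟨h, hh, hbd⟩ := hφ.exists_leStar_bound hlam h𝒜.1 (hcard ▸ lift_lt.2 hμ)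
    obtain ⟨g, hg, hgh⟩ := h𝒜.2 h hh
    exact hgh (hbd g hg)
  · obtain ⟨ν, hν, hcard⟩ := exists_mk_image_Iio_ord_eq_lift φ lam
    refine ⟨ν, ⟨_, ⟨?_, fun g hg => ?_⟩, hcard⟩, hν⟩
    · rintro _ ⟨i, hi, rfl⟩
      exact hφ.1 i hi
    · obtain ⟨i, hi, hgi⟩ := hφ.2.2 _ (hg.add_one hκ)
      exact ⟨φ i, ⟨i, hi, rfl⟩, fun hig => not_leStar_add_one g (hgi.trans hig)⟩

theorem dNum_eq (hφ : IsScale κ lam φ) (hlam : lam.IsRegular)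
    (hκ : Order.IsSuccLimit κ) : dNum κ = lam := by
  refine csInf_eq_of_forall_ge_of_exists_le ?_ ?_
  · rintro μ ⟨𝒜, h𝒜, hcard⟩
    by_contra! hμ
    obtain ⟨h, hh, hbd⟩ := hφ.exists_leStar_bound hlam h𝒜.1 (hcard ▸ lift_lt.2 hμ)
    obtain ⟨g, hg, hhg⟩ := h𝒜.2 _ (hh.add_one hκ)
    exact not_leStar_add_one h (hhg.trans (hbd g hg))
  · obtain ⟨ν, hν, hcard⟩ := exists_mk_image_Iio_ord_eq_lift φ lam
    refine ⟨ν, ⟨_, ⟨?_, fun g hg => ?_⟩, hcard⟩, hν⟩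
    · rintro _ ⟨i, hi, rfl⟩
      exact hφ.1 i hi
    · obtain ⟨i, hi, hgi⟩ := hφ.2.2 g hg
      exact ⟨φ i, ⟨i, hi, rfl⟩, hgi⟩

end

section

variable {κ : Cardinal.{0}}

/-- The successor functions of a small base `ℬ` are bounded by some `g`, and a set splitting
every `B` with successor function below `g` is then neither in `W` nor outside it. -/
theorem lift_le_mk_of_isBase (hφ : IsScale κ.ord lam φ) (hreg : κ.IsRegular) (hunc : ℵ₀ < κ)
    (hlam : lam.IsRegular) {W ℬ : Set (Set Ordinal)} (hW : IsKUltrafilter κ.ord W)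
    (hWu : Uniform κ.ord W) (hℬ : IsBase κ.ord W ℬ) : Cardinal.lift.{1} lam ≤ #ℬ := by
  by_contra! hcard
  have hκ := isSuccLimit_ord hreg.aleph0_le
  have hnext : ∀ h ∈ nextAbove '' ℬ, FunOn κ.ord h := by
    rintro _ ⟨B, hB, rfl⟩ β hβ
    exact hW.subset B (hℬ.1 hB) (nextAbove_mem hκ (hWu B (hℬ.1 hB)) hβ).1
  obtain ⟨g, hg, hbd⟩ := hφ.exists_leStar_bound hlam hnext (mk_image_le.trans_lt hcard)
  obtain ⟨X, hXκ, hX⟩ := exists_splits_of_leStar hreg hunc hg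
  have hsplit : ∀ B ∈ ℬ, Splits κ.ord X B :=
    fun B hB => hX B (hWu B (hℬ.1 hB)) (hbd _ ⟨B, hB, rfl⟩)
  rcases hW.decide X hXκ with hXW | hXW
  · obtain ⟨B, hB, hBX⟩ := hℬ.2 _ hXW
    exact (hsplit B hB).not_almostSub hBX
  · obtain ⟨B, hB, hBX⟩ := hℬ.2 _ hXW
    exact (hsplit B hB).not_almostSub_diff hBX

theorem le_chNum (hφ : IsScale κ.ord lam φ) (hreg : κ.IsRegular) (hunc : ℵ₀ < κ)
    (hlam : lam.IsRegular) {W : Set (Set Ordinal)} (hW : IsKUltrafilter κ.ord W)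
    (hWu : Uniform κ.ord W) : lam ≤ chNum κ.ord W := by
  have hκ := isSuccLimit_ord hreg.aleph0_le
  obtain ⟨ν, hν⟩ := exists_mk_eq_lift_of_subset_Iio hW.subset
  refine le_csInf (s := {μ | ∃ ℬ, IsBase κ.ord W ℬ ∧ #ℬ = Cardinal.lift.{1} μ})
    ⟨ν, W, ⟨subset_rfl, fun A hA => ⟨A, hA, AlmostSub.refl hκ.bot_lt A⟩⟩, hν⟩ ?_
  rintro μ ⟨ℬ, hℬ, hcard⟩
  exact lift_le.1 (hcard ▸ hφ.lift_le_mk_of_isBase hreg hunc hlam hW hWu hℬ)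

theorem chNum_eq (hφ : IsScale κ.ord lam φ) (hreg : κ.IsRegular) (hunc : ℵ₀ < κ)
    (hlam : lam.IsRegular) {U : Set (Set Ordinal)} (hU : SimplePPoint κ.ord lam U) :
    chNum κ.ord U = lam :=
  le_antisymm hU.simplePFilter.chNum_le (hφ.le_chNum hreg hunc hlam hU.1 hU.2.1)

theorem uNum_eq (hφ : IsScale κ.ord lam φ) (hreg : κ.IsRegular) (hunc : ℵ₀ < κ)
    (hlam : lam.IsRegular) {U : Set (Set Ordinal)} (hU : SimplePPoint κ.ord lam U) :
    uNum κ.ord = lam := by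
  unfold uNum
  refine csInf_eq_of_forall_ge_of_exists_le ?_
    ⟨lam, ⟨U, hU.1, hU.2.1, hφ.chNum_eq hreg hunc hlam hU⟩, le_rfl⟩
  rintro _ ⟨W, hW, hWu, rfl⟩
  exact hφ.le_chNum hreg hunc hlam hW hWu

theorem uComNum_eq (hφ : IsScale κ.ord lam φ) (hreg : κ.IsRegular) (hunc : ℵ₀ < κ)
    (hlam : lam.IsRegular) (hlt : κ < lam) {U : Set (Set Ordinal)}
    (hU : SimplePPoint κ.ord lam U) : uComNum κ.ord = lam := by
  unfold uComNum
  refine csInf_eq_of_forall_ge_of_exists_le ?_ ⟨lam, ⟨U, hU.1, hU.2.1,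
    hU.kComplete hreg hlam hlt, hφ.chNum_eq hreg hunc hlam hU⟩, le_rfl⟩
  rintro _ ⟨W, hW, hWu, -, rfl⟩
  exact hφ.le_chNum hreg hunc hlam hW hWu

end

end IsScale

theorem stmt6_general (κ lam : Cardinal.{0}) (hreg : κ.IsRegular) (hunc : Cardinal.aleph0 < κ)
    (hlam : lam.IsRegular) (hlt : κ < lam)
    (U : Set (Set Ordinal)) (hU : SimplePPoint κ.ord lam U) :
    lam = dNum κ.ord ∧ lam = bNum κ.ord ∧ lam = uNum κ.ord ∧ lam = uComNum κ.ord ∧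
    ∀ μ : Cardinal.{0}, μ.IsRegular → μ ≠ lam → ¬ ∃ W, SimplePPoint κ.ord μ W := by
  have hκ := isSuccLimit_ord hreg.aleph0_le
  obtain ⟨φ, hφ⟩ := hU.exists_isScale hreg hunc hlam hlt
  refine ⟨(hφ.dNum_eq hlam hκ).symm, (hφ.bNum_eq hlam hκ).symm,
    (hφ.uNum_eq hreg hunc hlam hU).symm, (hφ.uComNum_eq hreg hunc hlam hlt hU).symm, ?_⟩
  rintro μ hμ hμlam ⟨W, hW⟩
  rcases hμlam.lt_or_gt with hlt' | hgt
  · exact ((hφ.le_chNum hreg hunc hlam hW.1 hW.2.1).trans hW.simplePFilter.chNum_le).not_gt hlt'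
  · obtain ⟨ψ, hψ⟩ := hW.exists_isScale hreg hunc hμ (hlt.trans hgt)
    exact ((hψ.le_chNum hreg hunc hμ hU.1 hU.2.1).trans_eq
      (hφ.chNum_eq hreg hunc hlam hU)).not_gt hgt

/-- if `κ < λ` are regular uncountable and there is a simple `P_λ`-point
on `κ`, then `λ = 𝔡_κ = 𝔟_κ = 𝔲_κ = 𝔲^com_κ`; in particular there is no simple
`P_μ`-point on `κ` for regular `μ ≠ λ`. -/
theorem stmt6 (κ lam : Cardinal.{0}) (hreg : κ.IsRegular) (hunc : Cardinal.aleph0 < κ)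
    (hlam : lam.IsRegular) (hlamunc : Cardinal.aleph0 < lam) (hlt : κ < lam)
    (U : Set (Set Ordinal)) (hU : SimplePPoint κ.ord lam U) :
    lam = dNum κ.ord ∧ lam = bNum κ.ord ∧ lam = uNum κ.ord ∧ lam = uComNum κ.ord ∧
    ∀ μ : Cardinal.{0}, μ.IsRegular → μ ≠ lam → ¬ ∃ W, SimplePPoint κ.ord μ W :=
  stmt6_general κ lam hreg hunc hlam hlt U hU

end PaperFormal
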